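/- arXiv:2002.01507 — 2 statements merged into one kernel-verified Lean document; each statement's English description precedes it below -/
import Mathlib

section
/- Let Ω be a probability amplitude on ℝⁿ and M an n×n real symmetric positive definite matrix. Then the mean value of the quantum potential is strictly positive: ⟨Q⟩ > 0. (Note that ∇Ω cannot vanish identically, since Ω² integrates to 1 and Ω tends to 0 at infinity.) -/
/-
Integrating `Ω ∂ⱼ∂ₖΩ` by parts turns `⟨Q⟩` into `(ħ²/2) ∫ ∇Ω · M ∇Ω`, the integral of a
continuous function that is nonnegative everywhere and positive wherever `∇Ω ≠ 0`, since `M` is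
positive definite. The gradient cannot vanish identically: `Ω` would then be constant, and every
constant has integral zero over `ℝⁿ`, `n ≥ 1` (infinite volume), contradicting `∫ Ω² = 1`.
-/

open MeasureTheory Matrix Filter

/-- Partial derivative `∂ⱼ f` of a function on `ℝⁿ`. -/
noncomputable def pd {n : ℕ} (j : Fin n) (f : (Fin n → ℝ) → ℝ) (q : Fin n → ℝ) : ℝ :=
  fderiv ℝ f q (Pi.single j 1)

/-- Mean value of the quantum potential `⟨Q⟩ = -(ħ²/2) ∫ Ω Σⱼₖ Mⱼₖ ∂ⱼ∂ₖΩ`. -/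
noncomputable def meanQ {n : ℕ} (hbar : ℝ) (M : Matrix (Fin n) (Fin n) ℝ)
    (Ω : (Fin n → ℝ) → ℝ) : ℝ :=
  -(hbar ^ 2 / 2) * ∫ q, Ω q * ∑ j, ∑ k, M j k * pd j (pd k Ω) q

theorem Matrix.dotProduct_mulVec_eq_sum_sum {ι R : Type*} [Fintype ι] [CommSemiring R]
    (M : Matrix ι ι R) (v : ι → R) :
    v ⬝ᵥ M *ᵥ v = ∑ j, ∑ k, M j k * (v j * v k) := by
  simp only [dotProduct, mulVec, Finset.mul_sum]
  exact Finset.sum_congr rfl fun j _ => Finset.sum_congr rfl fun k _ => by ring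

theorem MeasureTheory.integral_sum_sum_const_mul {α ι κ : Type*} [MeasurableSpace α]
    {μ : Measure α} [Fintype ι] [Fintype κ] (c : ι → κ → ℝ) {f : ι → κ → α → ℝ}
    (hf : ∀ j k, Integrable (f j k) μ) :
    ∫ x, ∑ j, ∑ k, c j k * f j k x ∂μ = ∑ j, ∑ k, c j k * ∫ x, f j k x ∂μ := by
  rw [integral_finsetSum _ fun j _ => integrable_finsetSum _ fun k _ => (hf j k).const_mul _]
  refine Finset.sum_congr rfl fun j _ => ?_
  rw [integral_finsetSum _ fun k _ => (hf j k).const_mul _]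
  exact Finset.sum_congr rfl fun k _ => integral_const_mul _ _

theorem MeasureTheory.integral_const_eq_zero_of_noncompactSpace {G E : Type*} [MeasurableSpace G]
    [TopologicalSpace G] [BorelSpace G] [AddGroup G] [IsTopologicalAddGroup G]
    [WeaklyLocallyCompactSpace G] [NoncompactSpace G] [NormedAddCommGroup E] [NormedSpace ℝ E]
    [CompleteSpace E] (μ : Measure G)
    [μ.IsOpenPosMeasure] [μ.IsAddLeftInvariant] (c : E) : ∫ _ : G, c ∂μ = 0 := by
  rw [integral_const, measureReal_def, measure_univ_of_isAddLeftInvariant]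
  simp

section PartialDerivatives

variable {n : ℕ} {f g : (Fin n → ℝ) → ℝ}

noncomputable def grad (f : (Fin n → ℝ) → ℝ) (q : Fin n → ℝ) : Fin n → ℝ := fun j => pd j f q

theorem ContDiff.pd {m k : WithTop ℕ∞} (hf : ContDiff ℝ k f) (hmk : m + 1 ≤ k) (j : Fin n) :
    ContDiff ℝ m (pd j f) :=
  (hf.fderiv_right hmk).clm_apply contDiff_const

theorem ContDiff.continuous_grad (hf : ContDiff ℝ 1 f) : Continuous (grad f) :=
  continuous_pi fun j => (hf.pd (m := 0) (by norm_num) j).continuous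

theorem pd_mul {q : Fin n → ℝ} (hf : DifferentiableAt ℝ f q) (hg : DifferentiableAt ℝ g q)
    (j : Fin n) : pd j (fun x => f x * g x) q = f q * pd j g q + pd j f q * g q := by
  simp only [pd, fderiv_fun_mul hf hg, _root_.add_apply, _root_.smul_apply, smul_eq_mul]
  ring

theorem fderiv_eq_zero_of_grad_eq_zero {q : Fin n → ℝ} (h : grad f q = 0) : fderiv ℝ f q = 0 := by
  refine ContinuousLinearMap.coe_injective (LinearMap.pi_ext fun j x => ?_)
  rw [← mul_one x, ← smul_eq_mul, Pi.single_smul']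
  simp [show fderiv ℝ f q (Pi.single j 1) = 0 from congrFun h j]

theorem integral_mul_pd_eq_neg (hf : Differentiable ℝ f) (hg : Differentiable ℝ g) (j : Fin n)
    (hfg : Integrable fun q => f q * pd j g q) (hfg' : Integrable fun q => pd j f q * g q)
    (hbd : ∫ q, pd j (fun x => f x * g x) q = 0) :
    ∫ q, f q * pd j g q = -∫ q, pd j f q * g q := by
  simp only [pd_mul (hf _) (hg _), integral_add hfg hfg'] at hbd
  linarith

theorem exists_grad_ne_zero (hn : 1 ≤ n) (hf : Differentiable ℝ f) (G : ℝ → ℝ)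
    (hG : ∫ q, G (f q) ≠ 0) : ∃ q, grad f q ≠ 0 := by
  by_contra! hgrad
  have hconst (q : Fin n → ℝ) : f q = f 0 :=
    is_const_of_fderiv_eq_zero hf (fun q => fderiv_eq_zero_of_grad_eq_zero (hgrad q)) q 0
  have : Nonempty (Fin n) := Fin.pos_iff_nonempty.mp hn
  exact hG (by simp only [hconst, integral_const_eq_zero_of_noncompactSpace])

theorem integral_grad_dotProduct_mulVec_pos (hn : 1 ≤ n) {M : Matrix (Fin n) (Fin n) ℝ}
    (hM : M.PosDef) (hf : ContDiff ℝ 1 f) (hint : ∀ j k, Integrable fun q => pd j f q * pd k f q)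
    (G : ℝ → ℝ) (hG : ∫ q, G (f q) ≠ 0) :
    0 < ∫ q, grad f q ⬝ᵥ M *ᵥ grad f q := by
  obtain ⟨q, hq⟩ := exists_grad_ne_zero hn (hf.differentiable one_ne_zero) G hG
  have hcont : Continuous fun q => grad f q ⬝ᵥ M *ᵥ grad f q :=
    hf.continuous_grad.dotProduct (continuous_const.matrix_mulVec hf.continuous_grad)
  have hint' : Integrable fun q => grad f q ⬝ᵥ M *ᵥ grad f q := by
    simp only [dotProduct_mulVec_eq_sum_sum]
    exact integrable_finsetSum _ fun j _ =>
      integrable_finsetSum _ fun k _ => (hint j k).const_mul _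
  refine integral_pos_of_integrable_nonneg_nonzero (x := q) hcont hint' (fun q => ?_) ?_
  · simpa using hM.posSemidef.dotProduct_mulVec_nonneg (grad f q)
  · simpa using (hM.dotProduct_mulVec_pos hq).ne'

end PartialDerivatives

theorem meanQ_eq_integral_grad_dotProduct_mulVec {n : ℕ} (hbar : ℝ) (M : Matrix (Fin n) (Fin n) ℝ)
    {Ω : (Fin n → ℝ) → ℝ} (hΩ : ContDiff ℝ 2 Ω)
    (hint1 : ∀ j k, Integrable (fun q => Ω q * pd j (pd k Ω) q))
    (hint2 : ∀ j k, Integrable (fun q => pd j Ω q * pd k Ω q))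
    (hbd : ∀ j k, ∫ q, pd j (fun x => Ω x * pd k Ω x) q = 0) :
    meanQ hbar M Ω = hbar ^ 2 / 2 * ∫ q, grad Ω q ⬝ᵥ M *ᵥ grad Ω q := by
  have hibp (j k : Fin n) : ∫ q, Ω q * pd j (pd k Ω) q = -∫ q, pd j Ω q * pd k Ω q :=
    integral_mul_pd_eq_neg (hΩ.differentiable two_ne_zero)
      ((hΩ.pd (by norm_num) k).differentiable one_ne_zero) j (hint1 j k) (hint2 j k) (hbd j k)
  simp only [meanQ, dotProduct_mulVec_eq_sum_sum, grad, Finset.mul_sum, mul_left_comm (Ω _)]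
  rw [integral_sum_sum_const_mul M hint1, integral_sum_sum_const_mul M hint2]
  simp only [hibp, mul_neg, Finset.sum_neg_distrib]
  ring

theorem meanQ_pos_general {n : ℕ} (hn : 1 ≤ n) (hbar : ℝ) (hhbar : 0 < hbar)
    (Ω : (Fin n → ℝ) → ℝ) (hΩc : ContDiff ℝ 2 Ω)
    (hΩnorm : ∫ q, (Ω q) ^ 2 = 1)
    (M : Matrix (Fin n) (Fin n) ℝ) (hM : M.PosDef)
    -- all integrals appearing converge absolutely
    (hint1 : ∀ j k, Integrable (fun q => Ω q * pd j (pd k Ω) q))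
    (hint2 : ∀ j k, Integrable (fun q => pd j Ω q * pd k Ω q))
    -- all boundary terms in integration by parts vanish
    (hbd1 : ∀ j k, ∫ q, pd j (fun x => Ω x * pd k Ω x) q = 0) :
    0 < meanQ hbar M Ω := by
  rw [meanQ_eq_integral_grad_dotProduct_mulVec hbar M hΩc hint1 hint2 hbd1]
  have hpos := integral_grad_dotProduct_mulVec_pos hn hM (hΩc.of_le (by norm_num)) hint2
    (· ^ 2) (by rw [hΩnorm]; exact one_ne_zero)
  positivity

/-- the mean value of the quantum potential is strictly positive. -/
theorem meanQ_pos {n : ℕ} (hn : 1 ≤ n) (hbar : ℝ) (hhbar : 0 < hbar)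
    (Ω : (Fin n → ℝ) → ℝ) (hΩc : ContDiff ℝ 2 Ω) (hΩpos : ∀ q, 0 < Ω q)
    (hΩnorm : ∫ q, (Ω q) ^ 2 = 1)
    (M : Matrix (Fin n) (Fin n) ℝ) (hM : M.PosDef)
    -- all integrals appearing converge absolutely
    (hint1 : ∀ j k, Integrable (fun q => Ω q * pd j (pd k Ω) q))
    (hint2 : ∀ j k, Integrable (fun q => pd j Ω q * pd k Ω q))
    -- all boundary terms in integration by parts vanish
    (hbd1 : ∀ j k, ∫ q, pd j (fun x => Ω x * pd k Ω x) q = 0) :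
    0 < meanQ hbar M Ω :=
  meanQ_pos_general hn hbar hhbar Ω hΩc hΩnorm M hM hint1 hint2 hbd1
end

section
/- Let ψ = Ω e^{iS/ħ} be a pure state on ℝ (one degree of freedom) with finite position variance Δq² := ⟨q²⟩ − ⟨q⟩² and finite momentum variance Δp² := ħ² ∫ |ψ'|² dq − p², where p := ∫ ψ̄(−iħψ') dq. Then Δp² Δq² − Cov(S',S') Δq² − ħ²/4 ≥ 0, where Cov(S',S') is the variance of S' with respect to the probability density Ω². In particular Δp² Δq² ≥ ħ²/4. -/
open MeasureTheory Filter

/-- Mean value `⟨T⟩ = ∫ Ω² T` with respect to the probability density `Ω²` on `ℝ`. -/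
noncomputable def expec1 (Ω T : ℝ → ℝ) : ℝ := ∫ q, (Ω q) ^ 2 * T q

/-- Covariance `Cov(T,T') = ⟨TT'⟩ - ⟨T⟩⟨T'⟩` with respect to `Ω²`. -/
noncomputable def cov1 (Ω T T' : ℝ → ℝ) : ℝ :=
  expec1 Ω (fun q => T q * T' q) - expec1 Ω T * expec1 Ω T'

/-- The pure state `ψ = Ω e^{iS/ħ}` on `ℝ`. -/
noncomputable def pureState1 (hbar : ℝ) (Ω S : ℝ → ℝ) (q : ℝ) : ℂ :=
  (Ω q : ℂ) * Complex.exp (Complex.I * (S q : ℂ) / (hbar : ℂ))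

/-- The momentum mean `p = ∫ ψ̄ (-iħ ψ')`. -/
noncomputable def momMean1 (hbar : ℝ) (Ω S : ℝ → ℝ) : ℂ :=
  ∫ q, (starRingEnd ℂ) (pureState1 hbar Ω S q) *
    (-(hbar : ℂ) * Complex.I * deriv (pureState1 hbar Ω S) q)

/-!
Since `ψ' = (Ω' + i Ω S'/ħ) e^{iS/ħ}`, one has `|ψ'|² = Ω'² + Ω² S'²/ħ²` and
`ψ̄ (-iħψ') = Ω² S' - iħ Ω Ω'`; the imaginary part integrates to zero because `∫ (Ω²)' = 0`,
so `p = ⟨S'⟩` and `Δp² = ħ² ∫ Ω'² + Cov(S',S')`. The claim thus reduces to Weyl's inequality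
`∫ Ω'² · Δq² ≥ 1/4` for the real amplitude, which is Cauchy–Schwarz for `Ω'` and
`(q - ⟨q⟩) Ω`: their pairing is `-1/2`, by integrating `(q Ω²)' = Ω² + 2 q Ω Ω'`.
-/

section Integrals

variable {α : Type*} [MeasurableSpace α] {μ : Measure α}

theorem sq_integral_mul_le_integral_sq_mul_integral_sq {f g : α → ℝ}
    (hf : MemLp f 2 μ) (hg : MemLp g 2 μ) :
    (∫ x, f x * g x ∂μ) ^ 2 ≤ (∫ x, f x ^ 2 ∂μ) * ∫ x, g x ^ 2 ∂μ := by
  have hfg : Integrable (fun x => f x * g x) μ := hf.integrable_mul hg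
  have hquad : ∀ t : ℝ, 0 ≤ (∫ x, f x ^ 2 ∂μ) * (t * t) + 2 * (∫ x, f x * g x ∂μ) * t
      + ∫ x, g x ^ 2 ∂μ := by
    intro t
    have hexp : (fun x => (t * f x + g x) ^ 2)
        = fun x => (t * t) * f x ^ 2 + (2 * t) * (f x * g x) + g x ^ 2 := by
      ext x; ring
    have h0 : 0 ≤ ∫ x, (t * f x + g x) ^ 2 ∂μ := integral_nonneg fun x => sq_nonneg _
    have hi : Integrable (fun x => (t * t) * f x ^ 2 + (2 * t) * (f x * g x)) μ :=
      (hf.integrable_sq.const_mul _).add (hfg.const_mul _)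
    rw [hexp, integral_add hi hg.integrable_sq,
      integral_add (hf.integrable_sq.const_mul _) (hfg.const_mul _),
      integral_const_mul, integral_const_mul] at h0
    linarith
  have := discrim_le_zero hquad
  rw [discrim] at this
  linarith

theorem integral_mul_sub_integral_sq {w f : α → ℝ} (hw : Integrable w μ)
    (hw1 : ∫ x, w x ∂μ = 1) (hwf : Integrable (fun x => w x * f x) μ)
    (hwf2 : Integrable (fun x => w x * f x ^ 2) μ) :
    ∫ x, w x * (f x - ∫ y, w y * f y ∂μ) ^ 2 ∂μ
      = ∫ x, w x * f x ^ 2 ∂μ - (∫ x, w x * f x ∂μ) ^ 2 := by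
  set m := ∫ y, w y * f y ∂μ
  have hexp : (fun x => w x * (f x - m) ^ 2)
      = fun x => w x * f x ^ 2 - (2 * m) * (w x * f x) + m ^ 2 * w x := by
    ext x; ring
  have hi : Integrable (fun x => w x * f x ^ 2 - (2 * m) * (w x * f x)) μ :=
    hwf2.sub (hwf.const_mul _)
  rw [hexp, integral_add hi (hw.const_mul _),
    integral_sub hwf2 (hwf.const_mul _), integral_const_mul, integral_const_mul, hw1]
  ring

theorem sq_integral_mul_le_integral_mul_sq {w f : α → ℝ} (hw0 : ∀ x, 0 ≤ w x)
    (hw : Integrable w μ) (hw1 : ∫ x, w x ∂μ = 1) (hwf : Integrable (fun x => w x * f x) μ)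
    (hwf2 : Integrable (fun x => w x * f x ^ 2) μ) :
    (∫ x, w x * f x ∂μ) ^ 2 ≤ ∫ x, w x * f x ^ 2 ∂μ := by
  rw [← sub_nonneg, ← integral_mul_sub_integral_sq hw hw1 hwf hwf2]
  exact integral_nonneg fun x => mul_nonneg (hw0 x) (sq_nonneg _)

end Integrals

theorem Continuous.integrable_of_integrable_mul_sq {f : ℝ → ℝ} (hf : Continuous f)
    (hfq : Integrable (fun q => f q * q ^ 2)) : Integrable f := by
  have hloc : Integrable ((Set.Icc (-1 : ℝ) 1).indicator fun q => ‖f q‖) :=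
    (hf.norm.integrableOn_Icc).integrable_indicator measurableSet_Icc
  refine (hfq.norm.add hloc).mono' hf.aestronglyMeasurable (Eventually.of_forall fun q => ?_)
  by_cases hq : q ∈ Set.Icc (-1 : ℝ) 1
  · simp only [Pi.add_apply, Set.indicator_of_mem hq]
    exact le_add_of_nonneg_left (norm_nonneg _)
  · have h1 : 1 ≤ q ^ 2 := by
      rw [Set.mem_Icc, not_and_or, not_le, not_le] at hq
      rcases hq with h | h <;> nlinarith
    simp only [Pi.add_apply, Set.indicator_of_notMem hq, add_zero, norm_mul, norm_pow,
      Real.norm_eq_abs, sq_abs]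
    exact le_mul_of_one_le_right (abs_nonneg _) h1

theorem Continuous.memLp_two {f : ℝ → ℝ} (hf : Continuous f)
    (hf2 : Integrable fun q => f q ^ 2) : MemLp f 2 :=
  (memLp_two_iff_integrable_sq hf.aestronglyMeasurable).2 hf2

section Amplitude

variable {Ω : ℝ → ℝ}

theorem integral_mul_deriv_eq_zero (hΩ : Differentiable ℝ Ω)
    (hbd : ∫ q, deriv (fun x => Ω x ^ 2) q = 0) : ∫ q, Ω q * deriv Ω q = 0 := by
  have hderiv : deriv (fun x => Ω x ^ 2) = fun q => 2 * (Ω q * deriv Ω q) := by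
    ext q
    rw [((hΩ q).hasDerivAt.fun_pow 2).deriv]
    ring
  rw [hderiv, integral_const_mul] at hbd
  linarith

theorem integral_id_mul_mul_deriv_eq_neg_half (hΩ : Differentiable ℝ Ω)
    (hΩ2 : Integrable fun q => Ω q ^ 2) (hnorm : ∫ q, Ω q ^ 2 = 1)
    (hint : Integrable fun q => q * Ω q * deriv Ω q)
    (hbd : ∫ q, deriv (fun x => x * Ω x ^ 2) q = 0) :
    ∫ q, q * Ω q * deriv Ω q = -(1 / 2) := by
  have hderiv :
      deriv (fun x => x * Ω x ^ 2) = fun q => Ω q ^ 2 + 2 * (q * Ω q * deriv Ω q) := by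
    ext q
    have h : HasDerivAt (fun x => x * Ω x ^ 2)
        (1 * Ω q ^ 2 + q * ((2 : ℕ) * Ω q ^ (2 - 1) * deriv Ω q)) q :=
      (hasDerivAt_id' q).mul ((hΩ q).hasDerivAt.fun_pow 2)
    rw [h.deriv]
    push_cast
    ring
  rw [hderiv, integral_add hΩ2 (hint.const_mul 2), integral_const_mul, hnorm] at hbd
  linarith

theorem one_div_four_le_integral_deriv_sq_mul_variance (hΩ : ContDiff ℝ 1 Ω)
    (hnorm : ∫ q, Ω q ^ 2 = 1) (hΩ' : Integrable fun q => deriv Ω q ^ 2)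
    (hq2 : Integrable fun q => Ω q ^ 2 * q ^ 2) (hq : Integrable fun q => Ω q ^ 2 * q)
    (hbd1 : ∫ q, deriv (fun x => Ω x ^ 2) q = 0)
    (hbd2 : ∫ q, deriv (fun x => x * Ω x ^ 2) q = 0) :
    1 / 4 ≤ (∫ q, deriv Ω q ^ 2) *
      ((∫ q, Ω q ^ 2 * q ^ 2) - (∫ q, Ω q ^ 2 * q) ^ 2) := by
  have hΩc : Continuous Ω := hΩ.continuous
  have hΩd : Differentiable ℝ Ω := hΩ.differentiable one_ne_zero
  have hΩ2 : Integrable fun q => Ω q ^ 2 := (hΩc.pow 2).integrable_of_integrable_mul_sq hq2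
  have LΩ : MemLp Ω 2 := hΩc.memLp_two hΩ2
  have LΩ' : MemLp (deriv Ω) 2 := (hΩ.continuous_deriv le_rfl).memLp_two hΩ'
  have LqΩ : MemLp (fun q => q * Ω q) 2 :=
    (show Continuous fun q => q * Ω q by fun_prop).memLp_two
      (hq2.congr (Eventually.of_forall fun q => by ring))
  set a := ∫ q, Ω q ^ 2 * q
  have Lg : MemLp (fun q => (q - a) * Ω q) 2 := by
    convert LqΩ.sub (LΩ.const_mul a) using 1
    ext q; simp only [Pi.sub_apply]; ring
  have hcross : ∫ q, deriv Ω q * ((q - a) * Ω q) = -(1 / 2) := by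
    have hΩΩ' : Integrable fun q => Ω q * deriv Ω q := LΩ.integrable_mul LΩ'
    have hqΩΩ' : Integrable fun q => q * Ω q * deriv Ω q := LqΩ.integrable_mul LΩ'
    have hexp : (fun q => deriv Ω q * ((q - a) * Ω q))
        = fun q => q * Ω q * deriv Ω q - a * (Ω q * deriv Ω q) := by
      ext q; ring
    rw [hexp, integral_sub hqΩΩ' (hΩΩ'.const_mul a), integral_const_mul,
      integral_mul_deriv_eq_zero hΩd hbd1,
      integral_id_mul_mul_deriv_eq_neg_half hΩd hΩ2 hnorm hqΩΩ' hbd2]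
    ring
  have hvar : ∫ q, ((q - a) * Ω q) ^ 2 = (∫ q, Ω q ^ 2 * q ^ 2) - a ^ 2 := by
    have h := integral_mul_sub_integral_sq (f := fun q => q) hΩ2 hnorm hq hq2
    beta_reduce at h
    rw [← h]
    congr 1; ext q; ring
  have hCS := sq_integral_mul_le_integral_sq_mul_integral_sq LΩ' Lg
  rw [hcross, hvar] at hCS
  linarith

end Amplitude

open Complex

theorem cov1_self_eq (Ω T : ℝ → ℝ) :
    cov1 Ω T T = (∫ q, Ω q ^ 2 * T q ^ 2) - (∫ q, Ω q ^ 2 * T q) ^ 2 := by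
  simp only [cov1, expec1, ← sq]

theorem norm_exp_I_mul_ofReal_div (s hbar : ℝ) : ‖exp (I * s / hbar)‖ = 1 := by
  rw [show I * s / hbar = ((s / hbar : ℝ) : ℂ) * I by push_cast; ring, norm_exp_ofReal_mul_I]

section PureState

variable {hbar : ℝ} {Ω S : ℝ → ℝ}

theorem hasDerivAt_pureState1 {q : ℝ} (hΩ : DifferentiableAt ℝ Ω q)
    (hS : DifferentiableAt ℝ S q) :
    HasDerivAt (pureState1 hbar Ω S)
      ((↑(deriv Ω q) + I * Ω q * ↑(deriv S q) / hbar) * exp (I * S q / hbar)) q := by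
  have hphase : HasDerivAt (fun x => I * (S x : ℂ) / hbar) (I * deriv S q / hbar) q :=
    (hS.hasDerivAt.ofReal_comp.const_mul I).div_const _
  exact (hΩ.hasDerivAt.ofReal_comp.fun_mul hphase.cexp).congr_deriv (by ring)

theorem normSq_deriv_pureState1 (hbar0 : hbar ≠ 0) (hΩ : Differentiable ℝ Ω)
    (hS : Differentiable ℝ S) (q : ℝ) :
    normSq (deriv (pureState1 hbar Ω S) q)
      = deriv Ω q ^ 2 + Ω q ^ 2 * deriv S q ^ 2 / hbar ^ 2 := by
  rw [(hasDerivAt_pureState1 (hΩ q) (hS q)).deriv, normSq_mul, normSq_eq_norm_sq (exp _),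
    norm_exp_I_mul_ofReal_div, show ↑(deriv Ω q) + I * Ω q * ↑(deriv S q) / hbar
      = ↑(deriv Ω q) + ((Ω q * deriv S q / hbar : ℝ) : ℂ) * I by push_cast; ring,
    normSq_add_mul_I]
  field_simp

theorem conj_pureState1_mul_momentum (hbar0 : hbar ≠ 0) (hΩ : Differentiable ℝ Ω)
    (hS : Differentiable ℝ S) (q : ℝ) :
    starRingEnd ℂ (pureState1 hbar Ω S q) * (-hbar * I * deriv (pureState1 hbar Ω S) q)
      = ((Ω q ^ 2 * deriv S q : ℝ) : ℂ) - ((hbar * (Ω q * deriv Ω q) : ℝ) : ℂ) * I := by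
  have hphase : starRingEnd ℂ (exp (I * S q / hbar)) * exp (I * S q / hbar) = 1 := by
    rw [conj_mul', norm_exp_I_mul_ofReal_div]; norm_num
  rw [(hasDerivAt_pureState1 (hΩ q) (hS q)).deriv, pureState1, map_mul, conj_ofReal]
  have hbar0' : (hbar : ℂ) ≠ 0 := ofReal_ne_zero.2 hbar0
  push_cast
  field_simp
  linear_combination
    (-(Ω q : ℂ) * I * (hbar * ↑(deriv Ω q) + Ω q * I * ↑(deriv S q))) * hphase
      - (Ω q : ℂ) ^ 2 * ↑(deriv S q) * I_sq

theorem integral_normSq_deriv_pureState1 (hbar0 : hbar ≠ 0) (hΩ : Differentiable ℝ Ω)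
    (hS : Differentiable ℝ S) (hΩ' : Integrable fun q => deriv Ω q ^ 2)
    (hΩS' : Integrable fun q => Ω q ^ 2 * deriv S q ^ 2) :
    ∫ q, normSq (deriv (pureState1 hbar Ω S) q)
      = (∫ q, deriv Ω q ^ 2) + (∫ q, Ω q ^ 2 * deriv S q ^ 2) / hbar ^ 2 := by
  simp_rw [normSq_deriv_pureState1 hbar0 hΩ hS]
  rw [integral_add hΩ' (hΩS'.div_const _), integral_div]

theorem momMean1_eq_ofReal (hbar0 : hbar ≠ 0) (hΩ : ContDiff ℝ 1 Ω)
    (hS : Differentiable ℝ S) (hΩ2 : Integrable fun q => Ω q ^ 2)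
    (hΩ' : Integrable fun q => deriv Ω q ^ 2)
    (hΩS' : Integrable fun q => Ω q ^ 2 * deriv S q)
    (hbd : ∫ q, deriv (fun x => Ω x ^ 2) q = 0) :
    momMean1 hbar Ω S = ↑(∫ q, Ω q ^ 2 * deriv S q) := by
  have hΩd : Differentiable ℝ Ω := hΩ.differentiable one_ne_zero
  have hΩΩ' : Integrable fun q => Ω q * deriv Ω q :=
    (hΩ.continuous.memLp_two hΩ2).integrable_mul
      ((hΩ.continuous_deriv le_rfl).memLp_two hΩ')
  rw [momMean1]
  simp_rw [conj_pureState1_mul_momentum hbar0 hΩd hS]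
  have hre : Integrable fun q => ((Ω q ^ 2 * deriv S q : ℝ) : ℂ) := hΩS'.ofReal
  have him : Integrable fun q => ((hbar * (Ω q * deriv Ω q) : ℝ) : ℂ) * I :=
    (hΩΩ'.const_mul hbar).ofReal.mul_const I
  rw [integral_sub hre him, integral_mul_const,
    integral_complex_ofReal, integral_complex_ofReal, integral_const_mul,
    integral_mul_deriv_eq_zero hΩd hbd]
  simp

theorem momentum_variance_eq (hbar0 : hbar ≠ 0) (hΩ : ContDiff ℝ 1 Ω)
    (hS : Differentiable ℝ S) (hΩ2 : Integrable fun q => Ω q ^ 2)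
    (hΩ' : Integrable fun q => deriv Ω q ^ 2) (hΩS' : Integrable fun q => Ω q ^ 2 * deriv S q)
    (hΩS'2 : Integrable fun q => Ω q ^ 2 * deriv S q ^ 2)
    (hbd : ∫ q, deriv (fun x => Ω x ^ 2) q = 0) :
    hbar ^ 2 * (∫ q, normSq (deriv (pureState1 hbar Ω S) q)) - ((momMean1 hbar Ω S) ^ 2).re
      = hbar ^ 2 * (∫ q, deriv Ω q ^ 2) + cov1 Ω (deriv S) (deriv S) := by
  rw [integral_normSq_deriv_pureState1 hbar0 (hΩ.differentiable one_ne_zero) hS hΩ' hΩS'2,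
    momMean1_eq_ofReal hbar0 hΩ hS hΩ2 hΩ' hΩS' hbd, ← ofReal_pow, ofReal_re, cov1_self_eq]
  field_simp
  ring

end PureState

theorem strengthened_uncertainty_1d_general (hbar : ℝ) (hhbar : 0 < hbar)
    (Ω : ℝ → ℝ) (hΩc : ContDiff ℝ 2 Ω)
    (hΩnorm : ∫ q, (Ω q) ^ 2 = 1)
    (S : ℝ → ℝ) (hSc : ContDiff ℝ 2 S)
    -- integrability hypotheses
    (hint1 : Integrable (fun q => (Ω q) ^ 2 * deriv S q))
    (hint2 : Integrable (fun q => (Ω q) ^ 2 * (deriv S q) ^ 2))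
    (hint3 : Integrable (fun q => (Ω q) ^ 2 * q ^ 2))
    (hint4 : Integrable (fun q => (Ω q) ^ 2 * q))
    (hint7 : Integrable (fun q => (deriv Ω q) ^ 2))
    -- all boundary terms in integration by parts vanish
    (hbd1 : ∫ q, deriv (fun x => (Ω x) ^ 2) q = 0)
    (hbd2 : ∫ q, deriv (fun x => x * (Ω x) ^ 2) q = 0) :
    (hbar ^ 2 * (∫ q, Complex.normSq (deriv (pureState1 hbar Ω S) q)) -
          ((momMean1 hbar Ω S) ^ 2).re) *
          ((∫ q, (Ω q) ^ 2 * q ^ 2) - (∫ q, (Ω q) ^ 2 * q) ^ 2) -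
        cov1 Ω (deriv S) (deriv S) *
          ((∫ q, (Ω q) ^ 2 * q ^ 2) - (∫ q, (Ω q) ^ 2 * q) ^ 2) -
        hbar ^ 2 / 4 ≥ 0 ∧
    (hbar ^ 2 * (∫ q, Complex.normSq (deriv (pureState1 hbar Ω S) q)) -
          ((momMean1 hbar Ω S) ^ 2).re) *
        ((∫ q, (Ω q) ^ 2 * q ^ 2) - (∫ q, (Ω q) ^ 2 * q) ^ 2) ≥ hbar ^ 2 / 4 := by
  have hΩ1 : ContDiff ℝ 1 Ω := hΩc.of_le one_le_two
  have hΩ2 : Integrable fun q => Ω q ^ 2 :=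
    (hΩ1.continuous.pow 2).integrable_of_integrable_mul_sq hint3
  have hΔq : 0 ≤ (∫ q, Ω q ^ 2 * q ^ 2) - (∫ q, Ω q ^ 2 * q) ^ 2 :=
    sub_nonneg.2 (sq_integral_mul_le_integral_mul_sq (f := fun q => q)
      (fun q => sq_nonneg _) hΩ2 hΩnorm hint4 hint3)
  have hcov : 0 ≤ cov1 Ω (deriv S) (deriv S) := by
    rw [cov1_self_eq, sub_nonneg]
    exact sq_integral_mul_le_integral_mul_sq (fun q => sq_nonneg _) hΩ2 hΩnorm hint1 hint2
  have hweyl :=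
    one_div_four_le_integral_deriv_sq_mul_variance hΩ1 hΩnorm hint7 hint3 hint4 hbd1 hbd2
  rw [momentum_variance_eq hhbar.ne' hΩ1 (hSc.differentiable two_ne_zero) hΩ2 hint7 hint1 hint2
    hbd1]
  constructor <;>
    nlinarith [mul_nonneg (sq_nonneg hbar) (sub_nonneg.2 hweyl), mul_nonneg hcov hΔq]

/-- the strengthened one-dimensional uncertainty relation
`Δp² Δq² - Cov(S',S') Δq² - ħ²/4 ≥ 0`, and in particular `Δp² Δq² ≥ ħ²/4`. -/
theorem strengthened_uncertainty_1d (hbar : ℝ) (hhbar : 0 < hbar)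
    (Ω : ℝ → ℝ) (hΩc : ContDiff ℝ 2 Ω) (hΩpos : ∀ q, 0 < Ω q)
    (hΩnorm : ∫ q, (Ω q) ^ 2 = 1)
    (S : ℝ → ℝ) (hSc : ContDiff ℝ 2 S)
    -- integrability hypotheses
    (hint1 : Integrable (fun q => (Ω q) ^ 2 * deriv S q))
    (hint2 : Integrable (fun q => (Ω q) ^ 2 * (deriv S q) ^ 2))
    (hint3 : Integrable (fun q => (Ω q) ^ 2 * q ^ 2))
    (hint4 : Integrable (fun q => (Ω q) ^ 2 * q))
    (hint5 : Integrable (fun q => q * (Ω q) ^ 2 * deriv S q))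
    (hint6 : Integrable (fun q => Complex.normSq (deriv (pureState1 hbar Ω S) q)))
    (hint7 : Integrable (fun q => (deriv Ω q) ^ 2))
    (hint8 : Integrable (fun q => (starRingEnd ℂ) (pureState1 hbar Ω S q) *
      (-(hbar : ℂ) * Complex.I * deriv (pureState1 hbar Ω S) q)))
    -- all boundary terms in integration by parts vanish
    (hbd1 : ∫ q, deriv (fun x => (Ω x) ^ 2) q = 0)
    (hbd2 : ∫ q, deriv (fun x => x * (Ω x) ^ 2) q = 0)
    (hbd3 : ∫ q, deriv (fun x => Ω x * deriv Ω x) q = 0) :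
    (hbar ^ 2 * (∫ q, Complex.normSq (deriv (pureState1 hbar Ω S) q)) -
          ((momMean1 hbar Ω S) ^ 2).re) *
          ((∫ q, (Ω q) ^ 2 * q ^ 2) - (∫ q, (Ω q) ^ 2 * q) ^ 2) -
        cov1 Ω (deriv S) (deriv S) *
          ((∫ q, (Ω q) ^ 2 * q ^ 2) - (∫ q, (Ω q) ^ 2 * q) ^ 2) -
        hbar ^ 2 / 4 ≥ 0 ∧
    (hbar ^ 2 * (∫ q, Complex.normSq (deriv (pureState1 hbar Ω S) q)) -
          ((momMean1 hbar Ω S) ^ 2).re) *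
        ((∫ q, (Ω q) ^ 2 * q ^ 2) - (∫ q, (Ω q) ^ 2 * q) ^ 2) ≥ hbar ^ 2 / 4 :=
  strengthened_uncertainty_1d_general hbar hhbar Ω hΩc hΩnorm S hSc hint1 hint2 hint3 hint4 hint7
    hbd1 hbd2
end
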